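/- Suppose A(t) = F g(t) for all t ≥ 0, and fix gains k_P > B_ξ + B_b and k_I > 0. Consider the modified observer in which the bias estimate is unconstrained: for every differentiable solution (Ā, b̄) : [0,∞) → ℝ^{n×n} × ℝ^{n×n} of Ā'(t) = Ā(t) ξ_m(t) − A(t) b̄(t) + k_P (A(t) − Ā(t)) and b̄'(t) = −k_I A(t)ᵀ (A(t) − Ā(t)), there exist constants a > 0 and C > 0, independent of the initial condition (Ā(0), b̄(0)) ∈ ℝ^{n×n} × ℝ^{n×n}, such that the errors E_A(t) = A(t) − Ā(t) and e_b(t) = b − b̄(t) satisfy ‖E_A(t)‖ + ‖e_b(t)‖ ≤ C (‖E_A(0)‖ + ‖e_b(0)‖) e^{−a t} for all t ≥ 0. -/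

import Mathlib

open Matrix

attribute [local instance] Matrix.frobeniusNormedAddCommGroup Matrix.frobeniusNormedSpace

attribute [local instance 100] LieRing.ofAssociativeRing

/-- Frobenius inner product `⟨A,B⟩ = tr(Aᵀ B)` on real square matrices. -/
noncomputable def finner {n : ℕ} (A B : Matrix (Fin n) (Fin n) ℝ) : ℝ := (Aᵀ * B).trace

/-- Minimum singular value: the infimum of `‖M x‖` over unit vectors `x`. -/
noncomputable def sigmaMin {n : ℕ} (M : Matrix (Fin n) (Fin n) ℝ) : ℝ :=
  sInf ((fun x : EuclideanSpace ℝ (Fin n) => ‖(Matrix.toEuclideanCLM (𝕜 := ℝ) M) x‖) '' {x | ‖x‖ = 1})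

/-- Maximum singular value: the supremum of `‖M x‖` over unit vectors `x`. -/
noncomputable def sigmaMax {n : ℕ} (M : Matrix (Fin n) (Fin n) ℝ) : ℝ :=
  sSup ((fun x : EuclideanSpace ℝ (Fin n) => ‖(Matrix.toEuclideanCLM (𝕜 := ℝ) M) x‖) '' {x | ‖x‖ = 1})

/-- Minimum eigenvalue of a symmetric matrix, via the Rayleigh quotient. -/
noncomputable def lambdaMin {n : ℕ} (M : Matrix (Fin n) (Fin n) ℝ) : ℝ :=
  sInf ((fun x : EuclideanSpace ℝ (Fin n) =>
    inner (𝕜 := ℝ) x ((Matrix.toEuclideanCLM (𝕜 := ℝ) M) x)) '' {x | ‖x‖ = 1})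

/-!
Write `E = A - Ā`, `e = b - b̄`. Since `A' = A ξ`, the errors obey `E' = E ξ_m - A e - k_P E` and
`e' = k_I Aᵀ E`. For `β = 1/(2 k_I)` and small `ε > 0`,
`W = ½‖E‖² + β‖e‖² + ε⟪E, A e⟫` is comparable to `‖E‖² + ‖e‖²`, and along the errors the indefinite
terms `±⟪E, A e⟫` cancel while the `ε`-term contributes `-ε‖A e‖² ≤ -ε c² ‖e‖²`, where `c > 0`
bounds `σ_min(F g)` from below. Hence `W' ≤ -r (‖E‖² + ‖e‖²) ≤ -(r/M) W`, so `W` decays like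
`e^{-(r/M) t}`, with `r`, `M` depending only on the gains and the a priori bounds.
-/

open Filter Topology Real WithLp
open scoped RealInnerProductSpace

namespace Matrix

variable {m p : Type*} [Fintype m] [Fintype p]

@[reducible]
noncomputable def frobeniusInnerProductSpace : InnerProductSpace ℝ (Matrix m p ℝ) where
  inner X Y := (Xᵀ * Y).trace
  norm_sq_eq_re_inner X := by
    rw [frobenius_norm_def, ← Real.rpow_natCast, ← Real.rpow_mul (by positivity), trace,
      Finset.sum_comm]
    norm_num [mul_apply, sq]
  conj_inner_symm X Y := by
    simp only [conj_trivial]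
    rw [← trace_transpose, transpose_mul, transpose_transpose]
  add_left X Y Z := by simp [Matrix.add_mul]
  smul_left X Y r := by simp

attribute [local instance] frobeniusInnerProductSpace

theorem real_inner_eq_trace (X Y : Matrix m p ℝ) : ⟪X, Y⟫ = (Xᵀ * Y).trace := rfl

theorem real_inner_mul_left (M : Matrix m m ℝ) (X Y : Matrix m p ℝ) :
    ⟪X, M * Y⟫ = ⟪Mᵀ * X, Y⟫ := by
  rw [real_inner_eq_trace, real_inner_eq_trace, transpose_mul, transpose_transpose,
    Matrix.mul_assoc]

theorem abs_real_inner_mul_le {l : Type*} [Fintype l] (X : Matrix m p ℝ) (Y : Matrix m l ℝ)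
    (Z : Matrix l p ℝ) : |⟪X, Y * Z⟫| ≤ ‖X‖ * (‖Y‖ * ‖Z‖) :=
  (abs_real_inner_le_norm _ _).trans (by gcongr; exact frobenius_norm_mul _ _)

theorem frobenius_norm_sq_eq_sum_cols (X : Matrix m p ℝ) :
    ‖X‖ ^ 2 = ∑ j, ‖toLp 2 (fun i => X i j)‖ ^ 2 := by
  rw [← frobenius_norm_transpose]
  change ‖toLp 2 fun j => toLp 2 fun i => X i j‖ ^ 2 = _
  rw [PiLp.norm_sq_eq_of_L2]

variable [DecidableEq m]

theorem mul_le_frobenius_norm_mul {M : Matrix m m ℝ} {c : ℝ} (hc : 0 ≤ c)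
    (h : ∀ v, c * ‖v‖ ≤ ‖toEuclideanCLM (𝕜 := ℝ) M v‖) (X : Matrix m p ℝ) :
    c * ‖X‖ ≤ ‖M * X‖ := by
  refine (pow_le_pow_iff_left₀ (by positivity) (norm_nonneg _) two_ne_zero).1 ?_
  rw [mul_pow, frobenius_norm_sq_eq_sum_cols, frobenius_norm_sq_eq_sum_cols, Finset.mul_sum]
  gcongr with j
  rw [← mul_pow]
  exact pow_le_pow_left₀ (by positivity) (h (toLp 2 fun i => X i j)) 2

theorem frobenius_norm_mul_le_mul {M : Matrix m m ℝ} {u : ℝ} (hu : 0 ≤ u)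
    (h : ∀ v, ‖toEuclideanCLM (𝕜 := ℝ) M v‖ ≤ u * ‖v‖) (X : Matrix m p ℝ) :
    ‖M * X‖ ≤ u * ‖X‖ := by
  refine (pow_le_pow_iff_left₀ (norm_nonneg _) (by positivity) two_ne_zero).1 ?_
  rw [mul_pow, frobenius_norm_sq_eq_sum_cols, frobenius_norm_sq_eq_sum_cols, Finset.mul_sum]
  gcongr with j
  rw [← mul_pow]
  exact pow_le_pow_left₀ (norm_nonneg _) (h (toLp 2 fun i => X i j)) 2

theorem norm_div_le_frobenius_norm_mul {F : Matrix m m ℝ} (hF : IsUnit F) (Y : Matrix m p ℝ) :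
    ‖Y‖ / (‖F⁻¹‖ + 1) ≤ ‖F * Y‖ := by
  rw [div_le_iff₀ (by positivity)]
  calc ‖Y‖ = ‖F⁻¹ * (F * Y)‖ := by
        rw [nonsing_inv_mul_cancel_left F Y ((isUnit_iff_isUnit_det F).1 hF)]
    _ ≤ ‖F⁻¹‖ * ‖F * Y‖ := frobenius_norm_mul _ _
    _ ≤ ‖F * Y‖ * (‖F⁻¹‖ + 1) := by nlinarith [norm_nonneg (F * Y)]

end Matrix

theorem ContinuousLinearMap.norm_apply_eq_norm_mul_norm_apply_normalize {E F : Type*}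
    [NormedAddCommGroup E] [NormedSpace ℝ E] [NormedAddCommGroup F] [NormedSpace ℝ F]
    (T : E →L[ℝ] F) (v : E) : ‖T v‖ = ‖v‖ * ‖T (NormedSpace.normalize v)‖ := by
  conv_lhs => rw [← NormedSpace.norm_smul_normalize v]
  rw [map_smul, norm_smul, norm_norm]

section SingularValues

variable {n : ℕ} {p : Type*} [Fintype p]

theorem sigmaMin_nonneg (M : Matrix (Fin n) (Fin n) ℝ) : 0 ≤ sigmaMin M :=
  Real.sInf_nonneg (by rintro _ ⟨x, -, rfl⟩; exact norm_nonneg _)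

theorem sigmaMax_nonneg (M : Matrix (Fin n) (Fin n) ℝ) : 0 ≤ sigmaMax M :=
  Real.sSup_nonneg (by rintro _ ⟨x, -, rfl⟩; exact norm_nonneg _)

theorem sigmaMin_mul_norm_le (M : Matrix (Fin n) (Fin n) ℝ) (v : EuclideanSpace ℝ (Fin n)) :
    sigmaMin M * ‖v‖ ≤ ‖toEuclideanCLM (𝕜 := ℝ) M v‖ := by
  rcases eq_or_ne v 0 with rfl | hv
  · simp
  rw [ContinuousLinearMap.norm_apply_eq_norm_mul_norm_apply_normalize, mul_comm]
  gcongr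
  exact csInf_le ⟨0, by rintro _ ⟨x, -, rfl⟩; exact norm_nonneg _⟩
    ⟨_, NormedSpace.norm_normalize hv, rfl⟩

theorem norm_le_sigmaMax_mul (M : Matrix (Fin n) (Fin n) ℝ) (v : EuclideanSpace ℝ (Fin n)) :
    ‖toEuclideanCLM (𝕜 := ℝ) M v‖ ≤ sigmaMax M * ‖v‖ := by
  rcases eq_or_ne v 0 with rfl | hv
  · simp
  rw [ContinuousLinearMap.norm_apply_eq_norm_mul_norm_apply_normalize, mul_comm]
  gcongr
  refine le_csSup ⟨‖toEuclideanCLM (𝕜 := ℝ) M‖, ?_⟩ ⟨_, NormedSpace.norm_normalize hv, rfl⟩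
  rintro _ ⟨x, hx, rfl⟩
  have hx : ‖x‖ = 1 := hx
  simpa [hx] using (toEuclideanCLM (𝕜 := ℝ) M).le_opNorm x

theorem sigmaMin_mul_le_frobenius_norm_mul (M : Matrix (Fin n) (Fin n) ℝ) (X : Matrix (Fin n) p ℝ) :
    sigmaMin M * ‖X‖ ≤ ‖M * X‖ :=
  mul_le_frobenius_norm_mul (sigmaMin_nonneg M) (sigmaMin_mul_norm_le M) X

theorem frobenius_norm_mul_le_sigmaMax_mul (M : Matrix (Fin n) (Fin n) ℝ) (X : Matrix (Fin n) p ℝ) :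
    ‖M * X‖ ≤ sigmaMax M * ‖X‖ :=
  frobenius_norm_mul_le_mul (sigmaMax_nonneg M) (norm_le_sigmaMax_mul M) X

theorem frobenius_norm_le_of_sigmaMax_le {M : Matrix (Fin n) (Fin n) ℝ} {u : ℝ}
    (h : sigmaMax M ≤ u) : ‖M‖ ≤ u * ‖(1 : Matrix (Fin n) (Fin n) ℝ)‖ := by
  simpa using (frobenius_norm_mul_le_sigmaMax_mul M (1 : Matrix (Fin n) (Fin n) ℝ)).trans
    (by gcongr)

theorem div_mul_le_frobenius_norm_mul_mul {F M : Matrix (Fin n) (Fin n) ℝ} {L : ℝ}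
    (hF : IsUnit F) (h : L ≤ sigmaMin M) (X : Matrix (Fin n) p ℝ) :
    L / (‖F⁻¹‖ + 1) * ‖X‖ ≤ ‖F * M * X‖ := by
  rw [Matrix.mul_assoc, div_mul_eq_mul_div]
  refine le_trans ?_ (norm_div_le_frobenius_norm_mul hF _)
  gcongr
  exact (mul_le_mul_of_nonneg_right h (norm_nonneg X)).trans
    (sigmaMin_mul_le_frobenius_norm_mul _ _)

end SingularValues

theorem le_mul_exp_of_hasDerivAt_le_neg_mul {f f' : ℝ → ℝ} {k : ℝ}
    (hf : ∀ t ≥ 0, HasDerivAt f (f' t) t) (hf' : ∀ t ≥ 0, f' t ≤ -k * f t) {t : ℝ} (ht : 0 ≤ t) :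
    f t ≤ f 0 * exp (-(k * t)) := by
  have hderiv : ∀ s ≥ 0, HasDerivAt (fun s => f s * exp (s * k))
      (f' s * exp (s * k) + f s * (exp (s * k) * k)) s := fun s hs =>
    (hf s hs).mul ((hasDerivAt_mul_const k).exp)
  have hanti : AntitoneOn (fun s => f s * exp (s * k)) (Set.Ici 0) := by
    refine antitoneOn_of_deriv_nonpos (convex_Ici 0)
      (fun s hs => (hderiv s hs).continuousAt.continuousWithinAt)
      (fun s hs => ?_) (fun s hs => ?_) <;> rw [interior_Ici] at hs
    · exact (hderiv s hs.le).differentiableAt.differentiableWithinAt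
    · rw [(hderiv s hs.le).deriv]
      nlinarith [hf' s hs.le, exp_pos (s * k)]
  have h : f t * exp (t * k) ≤ f 0 := by simpa using hanti Set.self_mem_Ici ht ht
  calc f t = f t * exp (t * k) * exp (-(k * t)) := by
        rw [mul_assoc, ← exp_add, show t * k + -(k * t) = 0 by ring, exp_zero, mul_one]
    _ ≤ f 0 * exp (-(k * t)) := by gcongr

theorem le_mul_exp_of_lyapunov {W W' Q : ℝ → ℝ} {m M r : ℝ} (hm : 0 < m) (hM : 0 < M)
    (hr : 0 ≤ r) (hW : ∀ t ≥ 0, HasDerivAt W (W' t) t) (hlow : ∀ t ≥ 0, m * Q t ≤ W t)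
    (hup : ∀ t ≥ 0, W t ≤ M * Q t) (hW' : ∀ t ≥ 0, W' t ≤ -(r * Q t)) {t : ℝ} (ht : 0 ≤ t) :
    Q t ≤ M / m * Q 0 * exp (-(r / M * t)) := by
  have hdecay := le_mul_exp_of_hasDerivAt_le_neg_mul hW (k := r / M) (fun s hs => by
    have : r / M * W s ≤ r * Q s := by
      rw [div_mul_eq_mul_div, div_le_iff₀ hM, mul_assoc]
      exact mul_le_mul_of_nonneg_left ((hup s hs).trans_eq (mul_comm _ _)) hr
    linarith [hW' s hs]) ht
  rw [mul_assoc, div_mul_eq_mul_div, le_div_iff₀ hm]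
  calc Q t * m ≤ W 0 * exp (-(r / M * t)) := by linarith [hlow t ht]
    _ ≤ M * (Q 0 * exp (-(r / M * t))) := by
      rw [← mul_assoc]; gcongr; exact hup 0 le_rfl

theorem quadratic_le_neg_min_mul {δ ε c K₁ K₂ x y : ℝ} (hc : 0 < c) (hε : 0 ≤ ε)
    (h : ε * (K₁ ^ 2 / c ^ 2 + K₂) ≤ δ / 2) :
    -δ * x ^ 2 + ε * (K₁ * (x * y) + K₂ * x ^ 2 - c ^ 2 * y ^ 2) ≤
      -(min (δ / 2) (3 / 4 * ε * c ^ 2) * (x ^ 2 + y ^ 2)) := by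
  have hamgm : K₁ * (x * y) ≤ K₁ ^ 2 / c ^ 2 * x ^ 2 + c ^ 2 / 4 * y ^ 2 := by
    have := sq_nonneg (K₁ * x / c - c * y / 2)
    field_simp at this ⊢
    nlinarith
  have hx : ε * (K₁ ^ 2 / c ^ 2 + K₂) * x ^ 2 ≤ δ / 2 * x ^ 2 := by gcongr
  have hmin₁ := min_le_left (δ / 2) (3 / 4 * ε * c ^ 2)
  have hmin₂ := min_le_right (δ / 2) (3 / 4 * ε * c ^ 2)
  nlinarith [mul_le_mul_of_nonneg_left hamgm hε, sq_nonneg x, sq_nonneg y,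
    mul_le_mul_of_nonneg_right hmin₁ (sq_nonneg x), mul_le_mul_of_nonneg_right hmin₂ (sq_nonneg y)]

theorem add_le_sqrt_mul_of_sq_add_sq_le {x y x₀ y₀ K s : ℝ} (hx : 0 ≤ x) (hy : 0 ≤ y)
    (hx₀ : 0 ≤ x₀) (hy₀ : 0 ≤ y₀) (hK : 0 ≤ K) (hs : 0 ≤ s)
    (h : x ^ 2 + y ^ 2 ≤ K * (x₀ ^ 2 + y₀ ^ 2) * s ^ 2) :
    x + y ≤ √(2 * K) * (x₀ + y₀) * s := by
  refine (pow_le_pow_iff_left₀ (by positivity) (by positivity) two_ne_zero).1 ?_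
  calc (x + y) ^ 2 ≤ 2 * (x ^ 2 + y ^ 2) := by nlinarith [sq_nonneg (x - y)]
    _ ≤ 2 * (K * (x₀ ^ 2 + y₀ ^ 2) * s ^ 2) := by gcongr
    _ = 2 * K * (x₀ ^ 2 + y₀ ^ 2) * s ^ 2 := by ring
    _ ≤ 2 * K * (x₀ + y₀) ^ 2 * s ^ 2 := by gcongr; nlinarith [mul_nonneg hx₀ hy₀]
    _ = (√(2 * K) * (x₀ + y₀) * s) ^ 2 := by
      rw [mul_pow, mul_pow, Real.sq_sqrt (by positivity)]

section ErrorSystem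

attribute [local instance] Matrix.frobeniusNormedRing Matrix.frobeniusNormedAlgebra
  Matrix.frobeniusInnerProductSpace

variable {m : Type*} [Fintype m] [DecidableEq m]

noncomputable def observerLyapunov (β ε : ℝ) (A E e : Matrix m m ℝ) : ℝ :=
  1 / 2 * ‖E‖ ^ 2 + β * ‖e‖ ^ 2 + ε * ⟪E, A * e⟫

noncomputable def observerLyapunovDeriv (kP kI ε : ℝ) (A A' ξm E e : Matrix m m ℝ) : ℝ :=
  ⟪E, E * ξm⟫ - kP * ‖E‖ ^ 2 + ε * (⟪E, A' * e⟫ + kI * ‖Aᵀ * E‖ ^ 2 + ⟪E * ξm, A * e⟫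
    - ‖A * e‖ ^ 2 - kP * ⟪E, A * e⟫)

theorem hasDerivAt_observerLyapunov {A E e : ℝ → Matrix m m ℝ} {A' ξm : Matrix m m ℝ}
    {kP kI β ε t : ℝ} (hβ : β * kI = 1 / 2) (hA : HasDerivAt A A' t)
    (hE : HasDerivAt E (E t * ξm - A t * e t - kP • E t) t)
    (he : HasDerivAt e (kI • ((A t)ᵀ * E t)) t) :
    HasDerivAt (fun s => observerLyapunov β ε (A s) (E s) (e s))
      (observerLyapunovDeriv kP kI ε (A t) A' ξm (E t) (e t)) t := by
  refine (((hE.norm_sq.const_mul (1 / 2)).add (he.norm_sq.const_mul β)).add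
    ((hE.inner ℝ (hA.mul he)).const_mul ε)).congr_deriv ?_
  have hcross : ⟪e t, (A t)ᵀ * E t⟫ = ⟪E t, A t * e t⟫ := by
    rw [real_inner_mul_left, transpose_transpose, real_inner_comm]
  have hAAt : ⟪E t, A t * ((A t)ᵀ * E t)⟫ = ‖(A t)ᵀ * E t‖ ^ 2 := by
    rw [real_inner_mul_left, real_inner_self_eq_norm_sq]
  simp only [observerLyapunovDeriv, Pi.mul_apply, inner_sub_left, inner_sub_right, inner_add_right,
    real_inner_smul_left, real_inner_smul_right, mul_smul_comm, real_inner_self_eq_norm_sq,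
    hcross, hAAt]
  linear_combination (2 * ⟪E t, A t * e t⟫) * hβ

theorem observerLyapunov_bounds {A E e : Matrix m m ℝ} {β ε U : ℝ} (hε : 0 ≤ ε)
    (hεU : ε * U ≤ min (1 / 2) β) (hA : ‖A‖ ≤ U) :
    min (1 / 2) β / 2 * (‖E‖ ^ 2 + ‖e‖ ^ 2) ≤ observerLyapunov β ε A E e ∧
      observerLyapunov β ε A E e ≤ (1 + β) * (‖E‖ ^ 2 + ‖e‖ ^ 2) := by
  set μ := min (1 / 2) β
  have hμ : μ ≤ 1 / 2 ∧ μ ≤ β := ⟨min_le_left _ _, min_le_right _ _⟩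
  have hU : 0 ≤ U := (norm_nonneg A).trans hA
  have hcross : |ε * ⟪E, A * e⟫| ≤ μ / 2 * (‖E‖ ^ 2 + ‖e‖ ^ 2) := by
    calc |ε * ⟪E, A * e⟫| ≤ ε * (‖E‖ * (U * ‖e‖)) := by
          rw [abs_mul, abs_of_nonneg hε]
          gcongr
          exact (abs_real_inner_mul_le _ _ _).trans (by gcongr)
      _ = ε * U * (‖E‖ * ‖e‖) := by ring
      _ ≤ ε * U * ((‖E‖ ^ 2 + ‖e‖ ^ 2) / 2) :=
          mul_le_mul_of_nonneg_left (by nlinarith [sq_nonneg (‖E‖ - ‖e‖)]) (by positivity)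
      _ ≤ μ / 2 * (‖E‖ ^ 2 + ‖e‖ ^ 2) := by nlinarith [sq_nonneg ‖E‖, sq_nonneg ‖e‖]
  rw [abs_le] at hcross
  unfold observerLyapunov
  constructor <;> nlinarith [sq_nonneg ‖E‖, sq_nonneg ‖e‖]

theorem observerLyapunovDeriv_le {A A' ξm E e : Matrix m m ℝ} {kP kI ε B U D c : ℝ}
    (hε : 0 ≤ ε) (hkP : 0 ≤ kP) (hkI : 0 ≤ kI) (hc : 0 ≤ c) (hξm : ‖ξm‖ ≤ B) (hA : ‖A‖ ≤ U)
    (hA' : ‖A'‖ ≤ D) (hAe : c * ‖e‖ ≤ ‖A * e‖) :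
    observerLyapunovDeriv kP kI ε A A' ξm E e ≤ -(kP - B) * ‖E‖ ^ 2 +
      ε * ((D + (B + kP) * U) * (‖E‖ * ‖e‖) + kI * U ^ 2 * ‖E‖ ^ 2 - c ^ 2 * ‖e‖ ^ 2) := by
  have hx := norm_nonneg E
  have hy := norm_nonneg e
  have h₁ : ⟪E, E * ξm⟫ ≤ B * ‖E‖ ^ 2 :=
    (le_abs_self _).trans ((abs_real_inner_mul_le _ _ _).trans
      ((by gcongr : ‖E‖ * (‖E‖ * ‖ξm‖) ≤ ‖E‖ * (‖E‖ * B)).trans_eq (by ring)))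
  have h₂ : ⟪E, A' * e⟫ ≤ D * (‖E‖ * ‖e‖) :=
    (le_abs_self _).trans ((abs_real_inner_mul_le _ _ _).trans
      ((by gcongr : ‖E‖ * (‖A'‖ * ‖e‖) ≤ ‖E‖ * (D * ‖e‖)).trans_eq (by ring)))
  have h₃ : ‖Aᵀ * E‖ ^ 2 ≤ U ^ 2 * ‖E‖ ^ 2 := by
    rw [← mul_pow]
    gcongr
    exact (frobenius_norm_mul _ _).trans (by rw [frobenius_norm_transpose]; gcongr)
  have h₄ : ⟪E * ξm, A * e⟫ ≤ B * U * (‖E‖ * ‖e‖) := by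
    refine (real_inner_le_norm _ _).trans ?_
    calc ‖E * ξm‖ * ‖A * e‖ ≤ (‖E‖ * B) * (U * ‖e‖) := by
          have hB : 0 ≤ B := (norm_nonneg ξm).trans hξm
          gcongr
          · exact (frobenius_norm_mul _ _).trans (by gcongr)
          · exact (frobenius_norm_mul _ _).trans (by gcongr)
      _ = B * U * (‖E‖ * ‖e‖) := by ring
  have h₅ : -⟪E, A * e⟫ ≤ U * (‖E‖ * ‖e‖) :=
    (neg_le_abs _).trans ((abs_real_inner_mul_le _ _ _).trans
      ((by gcongr : ‖E‖ * (‖A‖ * ‖e‖) ≤ ‖E‖ * (U * ‖e‖)).trans_eq (by ring)))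
  have h₆ : c ^ 2 * ‖e‖ ^ 2 ≤ ‖A * e‖ ^ 2 := by
    rw [← mul_pow]; gcongr
  unfold observerLyapunovDeriv
  have hbracket : ⟪E, A' * e⟫ + kI * ‖Aᵀ * E‖ ^ 2 + ⟪E * ξm, A * e⟫ - ‖A * e‖ ^ 2
      - kP * ⟪E, A * e⟫ ≤ (D + (B + kP) * U) * (‖E‖ * ‖e‖) + kI * U ^ 2 * ‖E‖ ^ 2
      - c ^ 2 * ‖e‖ ^ 2 := by nlinarith
  nlinarith [mul_le_mul_of_nonneg_left hbracket hε]

theorem exists_exp_decay_of_observerError {A A' ξm : ℝ → Matrix m m ℝ} {kP kI B U D c : ℝ}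
    (hkP : B < kP) (hkI : 0 < kI) (hc : 0 < c) (hξm : ∀ t ≥ 0, ‖ξm t‖ ≤ B)
    (hA : ∀ t ≥ 0, HasDerivAt A (A' t) t) (hAU : ∀ t ≥ 0, ‖A t‖ ≤ U)
    (hA'D : ∀ t ≥ 0, ‖A' t‖ ≤ D) (hAc : ∀ t ≥ 0, ∀ X, c * ‖X‖ ≤ ‖A t * X‖) :
    ∃ a > 0, ∃ C > 0, ∀ E e : ℝ → Matrix m m ℝ,
      (∀ t ≥ 0, HasDerivAt E (E t * ξm t - A t * e t - kP • E t) t) →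
      (∀ t ≥ 0, HasDerivAt e (kI • ((A t)ᵀ * E t)) t) →
      ∀ t ≥ 0, ‖E t‖ + ‖e t‖ ≤ C * (‖E 0‖ + ‖e 0‖) * exp (-(a * t)) := by
  have hkP₀ : 0 ≤ kP := ((norm_nonneg _).trans (hξm 0 le_rfl)).trans hkP.le
  set β := 1 / (2 * kI)
  have hβ : β * kI = 1 / 2 := by simp only [β]; field_simp
  set μ := min (1 / 2) β
  have hμ : 0 < μ := lt_min one_half_pos (by positivity)
  set δ := kP - B
  have hδ : 0 < δ := sub_pos.2 hkP
  set K₁ := D + (B + kP) * U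
  set K₂ := kI * U ^ 2
  have small {P Q : ℝ} (hQ : 0 < Q) : ∀ᶠ ε in 𝓝[>] (0 : ℝ), ε * P ≤ Q :=
    ((continuous_mul_const P).tendsto' 0 0 (zero_mul P)).mono_left nhdsWithin_le_nhds
      |>.eventually (ge_mem_nhds hQ)
  obtain ⟨ε, ⟨hεU, hεK⟩, hε⟩ :=
    (((small (P := U) hμ).and (small (P := K₁ ^ 2 / c ^ 2 + K₂) (half_pos hδ))).and
      self_mem_nhdsWithin).exists
  set r := min (δ / 2) (3 / 4 * ε * c ^ 2)
  have hr : 0 < r := lt_min (half_pos hδ) (by positivity)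
  refine ⟨r / (1 + β) / 2, by positivity, √(2 * ((1 + β) / (μ / 2))), by positivity,
    fun E e hE he t ht => ?_⟩
  have hQ := le_mul_exp_of_lyapunov (W := fun s => observerLyapunov β ε (A s) (E s) (e s))
    (Q := fun s => ‖E s‖ ^ 2 + ‖e s‖ ^ 2) (by positivity) (by positivity) hr.le
    (fun s hs => hasDerivAt_observerLyapunov hβ (hA s hs) (hE s hs) (he s hs))
    (fun s hs => (observerLyapunov_bounds hε.le hεU (hAU s hs)).1)
    (fun s hs => (observerLyapunov_bounds hε.le hεU (hAU s hs)).2)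
    (fun s hs => (observerLyapunovDeriv_le hε.le hkP₀ hkI.le hc.le (hξm s hs) (hAU s hs)
      (hA'D s hs) (hAc s hs (e s))).trans (quadratic_le_neg_min_mul hc hε.le hεK)) ht
  refine add_le_sqrt_mul_of_sq_add_sq_le (norm_nonneg _) (norm_nonneg _) (norm_nonneg _)
    (norm_nonneg _) (by positivity) (exp_pos _).le (hQ.trans_eq ?_)
  congr 1
  rw [← exp_nat_mul]
  congr 1
  push_cast
  ring

end ErrorSystem

theorem observer_I_modified_unconstrained_bias_GES_general {n : ℕ}
    (g ξ : ℝ → Matrix (Fin n) (Fin n) ℝ)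
    (hg : ∀ t ≥ (0:ℝ), HasDerivAt g (g t * ξ t) t)
    (Bξ Bb Lg Ug : ℝ)
    (hLg : 0 < Lg)
    (hξbd : ∀ t ≥ (0:ℝ), ‖ξ t‖ ≤ Bξ)
    (hσ : ∀ t ≥ (0:ℝ), Lg ≤ sigmaMin (g t) ∧ sigmaMax (g t) ≤ Ug)
    (b : Matrix (Fin n) (Fin n) ℝ) (hbbd : ‖b‖ ≤ Bb)
    (ξm : ℝ → Matrix (Fin n) (Fin n) ℝ) (hξm : ∀ t, ξm t = ξ t + b)
    (F : Matrix (Fin n) (Fin n) ℝ) (hF : IsUnit F)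
    (A : ℝ → Matrix (Fin n) (Fin n) ℝ)
    (hA : ∀ t ≥ (0:ℝ), A t = F * g t)
    (kP kI : ℝ) (hkP : Bξ + Bb < kP) (hkI : 0 < kI) :
    ∃ a > (0:ℝ), ∃ C > (0:ℝ),
      ∀ Abar bbar : ℝ → Matrix (Fin n) (Fin n) ℝ,
        (∀ t ≥ (0:ℝ), HasDerivAt Abar (Abar t * ξm t - A t * bbar t + kP • (A t - Abar t)) t) →
        (∀ t ≥ (0:ℝ), HasDerivAt bbar (-(kI • ((A t)ᵀ * (A t - Abar t)))) t) →
        ∀ t ≥ (0:ℝ),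
          ‖A t - Abar t‖ + ‖b - bbar t‖ ≤
            C * (‖A 0 - Abar 0‖ + ‖b - bbar 0‖) * Real.exp (-(a * t)) := by
  let := Matrix.frobeniusNormedRing (α := ℝ) (m := Fin n)
  let := Matrix.frobeniusNormedAlgebra (R := ℝ) (α := ℝ) (m := Fin n)
  have hAU : ∀ t ≥ 0, ‖F * g t‖ ≤ ‖F‖ * (Ug * ‖(1 : Matrix (Fin n) (Fin n) ℝ)‖) := fun t ht =>
    (frobenius_norm_mul _ _).trans (by gcongr; exact frobenius_norm_le_of_sigmaMax_le (hσ t ht).2)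
  obtain ⟨a, ha, C, hC, hdecay⟩ := exists_exp_decay_of_observerError
    (A := fun s => F * g s) (A' := fun s => F * (g s * ξ s))
    (D := ‖F‖ * (Ug * ‖(1 : Matrix (Fin n) (Fin n) ℝ)‖) * Bξ) (c := Lg / (‖F⁻¹‖ + 1))
    hkP hkI (by positivity)
    (fun t ht => (hξm t ▸ norm_add_le _ _).trans (add_le_add (hξbd t ht) hbbd))
    (fun t ht => (hg t ht).const_mul F) hAU
    (fun t ht => by
      rw [← Matrix.mul_assoc]
      exact (frobenius_norm_mul _ _).trans
        (mul_le_mul (hAU t ht) (hξbd t ht) (norm_nonneg _) ((norm_nonneg _).trans (hAU t ht))))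
    (fun t ht => div_mul_le_frobenius_norm_mul_mul hF (hσ t ht).1)
  refine ⟨a, ha, C, hC, fun Abar bbar hAbar hbbar t ht => ?_⟩
  have hdecay_t := hdecay (fun s => F * g s - Abar s) (fun s => b - bbar s)
    (fun s hs => (((hg s hs).const_mul F).sub (hAbar s hs)).congr_deriv (by
      rw [hξm, hA s hs]; noncomm_ring))
    (fun s hs => ((hbbar s hs).const_sub b).congr_deriv (by rw [neg_neg, hA s hs])) t ht
  rwa [hA t ht, hA 0 le_rfl]

theorem observer_I_modified_unconstrained_bias_GES {n : ℕ}
    (𝔤 : LieSubalgebra ℝ (Matrix (Fin n) (Fin n) ℝ))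
    (g ξ : ℝ → Matrix (Fin n) (Fin n) ℝ)
    (hξmem : ∀ t, ξ t ∈ 𝔤)
    (hg : ∀ t ≥ (0:ℝ), HasDerivAt g (g t * ξ t) t)
    (Bξ Bb Lg Ug : ℝ)
    (hBξ : 0 < Bξ) (hBb : 0 < Bb) (hLg : 0 < Lg) (hUg : 0 < Ug)
    (hξbd : ∀ t ≥ (0:ℝ), ‖ξ t‖ ≤ Bξ)
    (hσ : ∀ t ≥ (0:ℝ), Lg ≤ sigmaMin (g t) ∧ sigmaMax (g t) ≤ Ug)
    (b : Matrix (Fin n) (Fin n) ℝ) (hbmem : b ∈ 𝔤) (hbbd : ‖b‖ ≤ Bb)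
    (ξm : ℝ → Matrix (Fin n) (Fin n) ℝ) (hξm : ∀ t, ξm t = ξ t + b)
    (F : Matrix (Fin n) (Fin n) ℝ) (hF : IsUnit F)
    (A : ℝ → Matrix (Fin n) (Fin n) ℝ)
    (hA : ∀ t ≥ (0:ℝ), A t = F * g t)
    (kP kI : ℝ) (hkP : Bξ + Bb < kP) (hkI : 0 < kI) :
    ∃ a > (0:ℝ), ∃ C > (0:ℝ),
      ∀ Abar bbar : ℝ → Matrix (Fin n) (Fin n) ℝ,
        (∀ t ≥ (0:ℝ), HasDerivAt Abar (Abar t * ξm t - A t * bbar t + kP • (A t - Abar t)) t) →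
        (∀ t ≥ (0:ℝ), HasDerivAt bbar (-(kI • ((A t)ᵀ * (A t - Abar t)))) t) →
        ∀ t ≥ (0:ℝ),
          ‖A t - Abar t‖ + ‖b - bbar t‖ ≤
            C * (‖A 0 - Abar 0‖ + ‖b - bbar 0‖) * Real.exp (-(a * t)) :=
  observer_I_modified_unconstrained_bias_GES_general g ξ hg Bξ Bb Lg Ug hLg hξbd hσ b hbbd ξm hξm F
    hF A hA kP kI hkP hkI
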